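/- Let X be a topological space and let x, y ∈ X. If x and y lie in the same path component of X, then the topological fundamental groups π₁^top(X,x) and π₁^top(X,y) are homeomorphic. -/

import Mathlib

attribute [local instance] Path.Homotopic.setoid

/-- The topological fundamental group: homotopy classes of loops at `x` with the
quotient topology induced from the compact-open topology on the loop space. -/
instance piTopTopology {X : Type*} [TopologicalSpace X] (x y : X) :
    TopologicalSpace (Path.Homotopic.Quotient x y) :=
  inferInstanceAs (TopologicalSpace (Quotient (Path.Homotopic.setoid x y)))

/-! Concatenation with a fixed path is continuous on path spaces, hence descends to a
continuous map of homotopy classes, and concatenating with the reverse path inverts it up to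
homotopy. Conjugation `[p] ↦ [γ⁻¹ * p * γ]` by a path `γ` from `x` to `y` is thus a homeomorphism. -/

namespace Path.Homotopic.Quotient

variable {X : Type*} [TopologicalSpace X] {x₀ x₁ x₂ : X}

theorem continuous_trans_left (a : Path.Homotopic.Quotient x₀ x₁) :
    Continuous fun q : Path.Homotopic.Quotient x₁ x₂ => a.trans q := by
  induction a using Quotient.ind with | mk a =>
  exact isQuotientMap_quotient_mk'.continuous_iff.mpr <|
    continuous_quotient_mk'.comp (continuous_const.path_trans continuous_id)

theorem continuous_trans_right (b : Path.Homotopic.Quotient x₁ x₂) :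
    Continuous fun q : Path.Homotopic.Quotient x₀ x₁ => q.trans b := by
  induction b using Quotient.ind with | mk b =>
  exact isQuotientMap_quotient_mk'.continuous_iff.mpr <|
    continuous_quotient_mk'.comp (continuous_id.path_trans continuous_const)

noncomputable def transLeftHomeomorph (a : Path.Homotopic.Quotient x₀ x₁) :
    Path.Homotopic.Quotient x₁ x₂ ≃ₜ Path.Homotopic.Quotient x₀ x₂ where
  toFun q := a.trans q
  invFun q := a.symm.trans q
  left_inv q := by simp only [← trans_assoc, symm_trans, refl_trans]
  right_inv q := by simp only [← trans_assoc, trans_symm, refl_trans]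
  continuous_toFun := continuous_trans_left a
  continuous_invFun := continuous_trans_left a.symm

noncomputable def transRightHomeomorph (b : Path.Homotopic.Quotient x₁ x₂) :
    Path.Homotopic.Quotient x₀ x₁ ≃ₜ Path.Homotopic.Quotient x₀ x₂ where
  toFun q := q.trans b
  invFun q := q.trans b.symm
  left_inv q := by simp only [trans_assoc, trans_symm, trans_refl]
  right_inv q := by simp only [trans_assoc, symm_trans, trans_refl]
  continuous_toFun := continuous_trans_right b
  continuous_invFun := continuous_trans_right b.symm

end Path.Homotopic.Quotient

theorem topological_fundamental_group_homeomorphic_of_joined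
    {X : Type*} [TopologicalSpace X] {x y : X} (h : Joined x y) :
    Nonempty (Path.Homotopic.Quotient x x ≃ₜ Path.Homotopic.Quotient y y) := by
  obtain ⟨γ⟩ := h
  let g : Path.Homotopic.Quotient x y := .mk γ
  exact ⟨g.symm.transLeftHomeomorph.trans g.transRightHomeomorph⟩
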